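/- Let Ω = (X, M, μ) be a measure space, 1 ≤ p < ∞ with p ≠ 2, and let φ : S → L^p(Ω) be given on a finite set of nodes S ⊆ ℕ*. Define σ(φ) = Σ_{ν|ν′} σ(φ(ν), φ(ν′)) + Σ_{ν′ ⊃ ν} σ(φ(ν′) − φ(ν), φ(ν′)), where ν, ν′ range over S, ν|ν′ means ν and ν′ are incomparable in the prefix order, and σ(f,g) = |4 − 2(√2)^p|^{−1} · |2(‖f‖_p^p + ‖g‖_p^p) − (‖f−g‖_p^p + ‖f+g‖_p^p)|. Then φ is a separating antitone map if and only if σ(φ) = 0. -/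

import Mathlib

open MeasureTheory Set
open scoped Classical

variable {X : Type*} [MeasurableSpace X]

/-- The `p`-th power of the `L^p` norm: `‖f‖_p^p = ∫ |f|^p dμ`. -/
noncomputable def pnormP (μ : Measure X) (p : ℝ) (f : X → ℂ) : ℝ :=
  ∫ t, ‖f t‖ ^ p ∂μ

/-- The functional `σ(f,g)` testing disjointness of supports. -/
noncomputable def sigmaPair (μ : Measure X) (p : ℝ) (f g : X → ℂ) : ℝ :=
  |4 - 2 * Real.sqrt 2 ^ p|⁻¹ *
    |2 * (pnormP μ p f + pnormP μ p g) - (pnormP μ p (f - g) + pnormP μ p (f + g))|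

/-- `σ(φ) = Σ_{ν|ν'} σ(φ(ν), φ(ν')) + Σ_{ν ⊂ ν'} σ(φ(ν') − φ(ν), φ(ν'))`. -/
noncomputable def sigmaMap (μ : Measure X) (p : ℝ) (S : Finset (List ℕ))
    (φ : List ℕ → X → ℂ) : ℝ :=
  (∑ q ∈ (S ×ˢ S).filter (fun q => ¬ q.1 <+: q.2 ∧ ¬ q.2 <+: q.1),
      sigmaPair μ p (φ q.1) (φ q.2)) +
  ∑ q ∈ (S ×ˢ S).filter (fun q => q.1 <+: q.2 ∧ q.1 ≠ q.2),
      sigmaPair μ p (φ q.2 - φ q.1) (φ q.2)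

/-!
Pick `c = ±1` so that `F x = c * x ^ (p / 2)` is strictly convex on `[0, ∞)`; then `‖z‖ ^ p` is
`c * F (‖z‖ ^ 2)`. By the parallelogram law `‖a‖ ^ 2 + ‖b‖ ^ 2` is the midpoint of `‖a - b‖ ^ 2`
and `‖a + b‖ ^ 2`, so Jensen gives `F ‖a - b‖² + F ‖a + b‖² ≥ 2 F (‖a‖² + ‖b‖²)`, while strict
superadditivity of `F` (convex with `F 0 = 0`) gives `F (‖a‖² + ‖b‖²) > F ‖a‖² + F ‖b‖²` unless
`a = 0` or `b = 0`. Hence the integrand of `2 (‖f‖ₚᵖ + ‖g‖ₚᵖ) - (‖f - g‖ₚᵖ + ‖f + g‖ₚᵖ)` has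
constant sign and vanishes exactly where `f g = 0`: `σ(f, g) = 0` iff `f` and `g` are disjointly
supported. Since `σ(φ)` is a sum of such nonnegative terms, it vanishes iff each does, and
`σ(φ ν' - φ ν, φ ν') = 0` says that `φ ν' = φ ν` wherever `φ ν' ≠ 0`.
-/

lemma StrictConvexOn.lt_div_mul_of_map_zero {f : ℝ → ℝ} (hf : StrictConvexOn ℝ (Ici 0) f)
    (h0 : f 0 = 0) {x z : ℝ} (hx : 0 < x) (hxz : x < z) : f x < x / z * f z := by
  have hz : 0 < z := hx.trans hxz
  have h := hf.2 (mem_Ici.2 hz.le) (mem_Ici.2 le_rfl) hz.ne' (div_pos hx hz)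
    (sub_pos.2 ((div_lt_one hz).2 hxz)) (add_sub_cancel _ _)
  simpa only [smul_eq_mul, mul_zero, add_zero, div_mul_cancel₀ x hz.ne', h0] using h

lemma StrictConvexOn.add_lt_map_add_of_map_zero {f : ℝ → ℝ} (hf : StrictConvexOn ℝ (Ici 0) f)
    (h0 : f 0 = 0) {x y : ℝ} (hx : 0 < x) (hy : 0 < y) : f x + f y < f (x + y) :=
  calc f x + f y < x / (x + y) * f (x + y) + y / (x + y) * f (x + y) :=
        add_lt_add (hf.lt_div_mul_of_map_zero h0 hx (by linarith))
          (hf.lt_div_mul_of_map_zero h0 hy (by linarith))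
    _ = f (x + y) := by field_simp

lemma ConvexOn.two_mul_map_add_div_two_le {s : Set ℝ} {f : ℝ → ℝ} (hf : ConvexOn ℝ s f)
    {x y : ℝ} (hx : x ∈ s) (hy : y ∈ s) : 2 * f ((x + y) / 2) ≤ f x + f y := by
  have h := hf.2 hx hy (by norm_num : (0 : ℝ) ≤ 1 / 2) (by norm_num : (0 : ℝ) ≤ 1 / 2)
    (by norm_num)
  simp only [smul_eq_mul] at h
  rw [show 1 / 2 * x + 1 / 2 * y = (x + y) / 2 by ring] at h
  linarith

lemma exists_strictConvexOn_const_mul_rpow {r : ℝ} (hr0 : 0 < r) (hr1 : r ≠ 1) :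
    ∃ c ≠ (0 : ℝ), StrictConvexOn ℝ (Ici 0) fun x : ℝ ↦ c * x ^ r := by
  rcases hr1.lt_or_gt with h | h
  · refine ⟨-1, by norm_num, ?_⟩
    simpa only [Pi.neg_def, neg_one_mul] using (Real.strictConcaveOn_rpow hr0 h).neg
  · exact ⟨1, one_ne_zero, by simpa only [one_mul] using strictConvexOn_rpow h⟩

lemma four_sub_two_mul_sqrt_two_rpow_ne_zero {p : ℝ} (hp : p ≠ 2) : 4 - 2 * √2 ^ p ≠ 0 := by
  have h2 : √2 ^ (2 : ℝ) = 2 := by rw [Real.rpow_two, Real.sq_sqrt zero_le_two]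
  intro h
  have : √2 ^ p = √2 ^ (2 : ℝ) := by linarith
  exact hp ((Real.rpow_right_inj (by positivity) (by norm_num)).1 this)

lemma sq_rpow_div_two {x : ℝ} (hx : 0 ≤ x) (p : ℝ) : (x ^ 2) ^ (p / 2) = x ^ p := by
  rw [← Real.rpow_natCast, ← Real.rpow_mul hx]
  ring_nf

lemma integrable_norm_rpow_of_memLp {E : Type*} [NormedAddCommGroup E] {μ : Measure X} {p : ℝ}
    (hp : 0 < p) {u : X → E} (hu : MemLp u (ENNReal.ofReal p) μ) :
    Integrable (fun t ↦ ‖u t‖ ^ p) μ := by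
  simpa only [ENNReal.toReal_ofReal hp.le] using
    hu.integrable_norm_rpow (ENNReal.ofReal_pos.2 hp).ne' ENNReal.ofReal_ne_top

section ParallelogramDefect

variable {E : Type*} [NormedAddCommGroup E]

noncomputable def parallelogramDefect (f : ℝ → ℝ) (a b : E) : ℝ :=
  2 * (f (‖a‖ ^ 2) + f (‖b‖ ^ 2)) - (f (‖a - b‖ ^ 2) + f (‖a + b‖ ^ 2))

lemma parallelogramDefect_const_mul (c : ℝ) (f : ℝ → ℝ) (a b : E) :
    parallelogramDefect (fun x ↦ c * f x) a b = c * parallelogramDefect f a b := by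
  simp only [parallelogramDefect]
  ring

lemma parallelogramDefect_rpow_div_two (p : ℝ) (a b : E) :
    parallelogramDefect (· ^ (p / 2)) a b =
      2 * (‖a‖ ^ p + ‖b‖ ^ p) - (‖a - b‖ ^ p + ‖a + b‖ ^ p) := by
  simp only [parallelogramDefect, sq_rpow_div_two (norm_nonneg _)]

lemma integrable_parallelogramDefect_rpow {μ : Measure X} {p : ℝ} (hp : 0 < p) {u v : X → E}
    (hu : MemLp u (ENNReal.ofReal p) μ) (hv : MemLp v (ENNReal.ofReal p) μ) :
    Integrable (fun t ↦ parallelogramDefect (· ^ (p / 2)) (u t) (v t)) μ := by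
  simp only [parallelogramDefect_rpow_div_two]
  have := integrable_norm_rpow_of_memLp hp hu
  have := integrable_norm_rpow_of_memLp hp hv
  have := integrable_norm_rpow_of_memLp hp (hu.sub hv)
  have := integrable_norm_rpow_of_memLp hp (hu.add hv)
  fun_prop

variable {f : ℝ → ℝ}

lemma parallelogramDefect_eq_zero_of_eq_zero_or (h0 : f 0 = 0) {a b : E}
    (hab : a = 0 ∨ b = 0) : parallelogramDefect f a b = 0 := by
  rcases hab with rfl | rfl <;> simp [parallelogramDefect, h0] <;> ring

variable [InnerProductSpace ℝ E]

lemma parallelogramDefect_neg_of_strictConvexOn (hf : StrictConvexOn ℝ (Ici 0) f)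
    (h0 : f 0 = 0) {a b : E} (ha : a ≠ 0) (hb : b ≠ 0) : parallelogramDefect f a b < 0 := by
  have hmid : (‖a - b‖ ^ 2 + ‖a + b‖ ^ 2) / 2 = ‖a‖ ^ 2 + ‖b‖ ^ 2 := by
    linarith [parallelogram_law_with_norm ℝ a b]
  have jensen := hf.convexOn.two_mul_map_add_div_two_le (mem_Ici.2 (sq_nonneg ‖a - b‖))
    (mem_Ici.2 (sq_nonneg ‖a + b‖))
  rw [hmid] at jensen
  have superadd := hf.add_lt_map_add_of_map_zero h0 (by positivity : 0 < ‖a‖ ^ 2)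
    (by positivity : 0 < ‖b‖ ^ 2)
  rw [parallelogramDefect]
  linarith

lemma parallelogramDefect_nonpos_of_strictConvexOn (hf : StrictConvexOn ℝ (Ici 0) f)
    (h0 : f 0 = 0) (a b : E) : parallelogramDefect f a b ≤ 0 := by
  by_cases hab : a = 0 ∨ b = 0
  · exact (parallelogramDefect_eq_zero_of_eq_zero_or h0 hab).le
  · rw [not_or] at hab
    exact (parallelogramDefect_neg_of_strictConvexOn hf h0 hab.1 hab.2).le

lemma parallelogramDefect_eq_zero_iff (hf : StrictConvexOn ℝ (Ici 0) f) (h0 : f 0 = 0)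
    {a b : E} : parallelogramDefect f a b = 0 ↔ a = 0 ∨ b = 0 := by
  refine ⟨fun h ↦ ?_, parallelogramDefect_eq_zero_of_eq_zero_or h0⟩
  by_contra! hab
  exact (parallelogramDefect_neg_of_strictConvexOn hf h0 hab.1 hab.2).ne h

lemma integral_parallelogramDefect_eq_zero_iff {μ : Measure X} {u v : X → E}
    (hf : StrictConvexOn ℝ (Ici 0) f) (h0 : f 0 = 0)
    (hint : Integrable (fun t ↦ parallelogramDefect f (u t) (v t)) μ) :
    ∫ t, parallelogramDefect f (u t) (v t) ∂μ = 0 ↔ ∀ᵐ t ∂μ, u t = 0 ∨ v t = 0 := by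
  rw [← neg_eq_zero, ← integral_neg, integral_eq_zero_iff_of_nonneg
    (fun t ↦ neg_nonneg.2 (parallelogramDefect_nonpos_of_strictConvexOn hf h0 _ _)) hint.neg]
  simp only [Filter.EventuallyEq, Pi.zero_apply, neg_eq_zero,
    parallelogramDefect_eq_zero_iff hf h0]

end ParallelogramDefect

lemma sub_pnormP_eq_integral_parallelogramDefect {μ : Measure X} {p : ℝ} (hp : 0 < p)
    {f g : X → ℂ} (hf : MemLp f (ENNReal.ofReal p) μ) (hg : MemLp g (ENNReal.ofReal p) μ) :
    2 * (pnormP μ p f + pnormP μ p g) - (pnormP μ p (f - g) + pnormP μ p (f + g)) =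
      ∫ t, parallelogramDefect (· ^ (p / 2)) (f t) (g t) ∂μ := by
  have hf' := integrable_norm_rpow_of_memLp hp hf
  have hg' := integrable_norm_rpow_of_memLp hp hg
  have hsub := integrable_norm_rpow_of_memLp hp (hf.sub hg)
  have hadd := integrable_norm_rpow_of_memLp hp (hf.add hg)
  simp only [Pi.sub_apply, Pi.add_apply] at hsub hadd
  simp only [parallelogramDefect_rpow_div_two, pnormP, Pi.sub_apply, Pi.add_apply]
  rw [integral_sub (by fun_prop) (by fun_prop), integral_const_mul, integral_add hf' hg',
    integral_add hsub hadd]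

lemma sigmaPair_eq_zero_iff {μ : Measure X} {p : ℝ} (hp : 0 < p) (hp2 : p ≠ 2) {f g : X → ℂ}
    (hf : MemLp f (ENNReal.ofReal p) μ) (hg : MemLp g (ENNReal.ofReal p) μ) :
    sigmaPair μ p f g = 0 ↔ ∀ᵐ t ∂μ, f t * g t = 0 := by
  obtain ⟨c, hc, hconv⟩ :=
    exists_strictConvexOn_const_mul_rpow (half_pos hp) (by contrapose! hp2; linarith)
  have key := integral_parallelogramDefect_eq_zero_iff (u := f) (v := g) hconv
    (by simp [Real.zero_rpow (half_pos hp).ne'])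
    (by simpa only [parallelogramDefect_const_mul] using
      (integrable_parallelogramDefect_rpow hp hf hg).const_mul c)
  simp only [parallelogramDefect_const_mul, integral_const_mul, mul_eq_zero, hc, false_or]
    at key
  rw [sigmaPair, mul_eq_zero, inv_eq_zero, abs_eq_zero, abs_eq_zero,
    or_iff_right (four_sub_two_mul_sqrt_two_rpow_ne_zero hp2),
    sub_pnormP_eq_integral_parallelogramDefect hp hf hg, key]
  simp only [mul_eq_zero]

lemma sigmaPair_nonneg (μ : Measure X) (p : ℝ) (f g : X → ℂ) : 0 ≤ sigmaPair μ p f g := by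
  unfold sigmaPair
  positivity

lemma sigmaMap_eq_zero_iff (μ : Measure X) (p : ℝ) (S : Finset (List ℕ))
    (φ : List ℕ → X → ℂ) :
    sigmaMap μ p S φ = 0 ↔
      (∀ ν ∈ S, ∀ ν' ∈ S, ¬ ν <+: ν' → ¬ ν' <+: ν → sigmaPair μ p (φ ν) (φ ν') = 0) ∧
      (∀ ν ∈ S, ∀ ν' ∈ S, ν <+: ν' → ν ≠ ν' → sigmaPair μ p (φ ν' - φ ν) (φ ν') = 0) := by
  rw [sigmaMap, add_eq_zero_iff_of_nonneg (Finset.sum_nonneg fun _ _ ↦ sigmaPair_nonneg ..)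
    (Finset.sum_nonneg fun _ _ ↦ sigmaPair_nonneg ..),
    Finset.sum_eq_zero_iff_of_nonneg fun _ _ ↦ sigmaPair_nonneg ..,
    Finset.sum_eq_zero_iff_of_nonneg fun _ _ ↦ sigmaPair_nonneg ..]
  simp only [Finset.mem_filter, Finset.mem_product, Prod.forall, and_imp]
  aesop

theorem stmt19 (μ : Measure X) (p : ℝ) (hp : 1 ≤ p) (hp2 : p ≠ 2)
    (S : Finset (List ℕ)) (φ : List ℕ → X → ℂ)
    (hmem : ∀ ν ∈ S, MemLp (φ ν) (ENNReal.ofReal p) μ) :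
    ((∀ ν ∈ S, ∀ ν' ∈ S, ¬ ν <+: ν' → ¬ ν' <+: ν →
        ∀ᵐ t ∂μ, φ ν t * φ ν' t = 0) ∧
     (∀ ν ∈ S, ∀ ν' ∈ S, ν <+: ν' →
        ∀ᵐ t ∂μ, φ ν' t ≠ 0 → φ ν' t = φ ν t)) ↔
    sigmaMap μ p S φ = 0 := by
  have hp0 : 0 < p := by linarith
  rw [sigmaMap_eq_zero_iff]
  refine and_congr (forall₂_congr fun ν hν ↦ forall₂_congr fun ν' hν' ↦ ?_)
    (forall₂_congr fun ν hν ↦ forall₂_congr fun ν' hν' ↦ imp_congr_right fun _ ↦ ?_)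
  · rw [sigmaPair_eq_zero_iff hp0 hp2 (hmem ν hν) (hmem ν' hν')]
  · rw [sigmaPair_eq_zero_iff hp0 hp2 ((hmem ν' hν').sub (hmem ν hν)) (hmem ν' hν')]
    simp only [Pi.sub_apply, mul_eq_zero, sub_eq_zero, or_iff_not_imp_right]
    refine ⟨fun h _ ↦ h, fun h ↦ ?_⟩
    by_cases hνν' : ν = ν'
    · subst hνν'
      exact ae_of_all _ fun _ _ ↦ rfl
    · exact h hνν'
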